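/- arXiv:2310.19794 — 2 statements merged into one kernel-verified Lean document; each statement's English description precedes it below -/
import Mathlib

section
/- Let B, A ∈ ℝ^{N×N} be matrices sharing the same support, with ‖[B]_i‖ ≤ 1 for every column i, where the support of column i of B is contained in a parent set Pa(i) of size at most d. Let Δ = A − B, and suppose for each i ∈ [N] there is a symmetric matrix M_i ⪰ I such that ‖[Δ]_i‖_{M_i} ≤ β. Then for each ℓ ≥ 1, every column of A^ℓ − B^ℓ satisfies ‖[A^ℓ − B^ℓ]_i‖ < d^{(ℓ−1)/2}·(β+1)^ℓ · max_{j∈[N]} λ_min(M_j)^{−1/2}. -/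
/-!
Write `Δ = A - B` and `S = max_j λ_min(M_j)^{-1/2}`. Since `M_i ⪰ λ_min(M_i) I`, every column of
`Δ` has norm at most `β S`, and since `M_i ⪰ I` also at most `β`, so the columns of `A` have
norm at most `β + 1`. If column `i` of `X` is supported on at most `d` rows, then by the triangle
and Cauchy–Schwarz inequalities column `i` of `C X` has norm at most `√d ‖X_i‖ max_k ‖C_k‖`.
Applied to `A^(ℓ+1) - B^(ℓ+1) = A^ℓ Δ + (A^ℓ - B^ℓ) B`, this gives by induction the bound
`√d^(ℓ-1) β S ∑_{k<ℓ} (β+1)^k = √d^(ℓ-1) ((β+1)^ℓ - 1) S`, strictly below the claimed one.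
-/

open Matrix

noncomputable def euclNorm {n : ℕ} (x : Fin n → ℝ) : ℝ := Real.sqrt (∑ i, (x i) ^ 2)

/-- Smallest eigenvalue of a symmetric matrix, as the infimum of the quadratic form on the
unit sphere. -/
noncomputable def qfInf {n : ℕ} (M : Matrix (Fin n) (Fin n) ℝ) : ℝ :=
  sInf {r : ℝ | ∃ x : Fin n → ℝ, euclNorm x = 1 ∧ r = x ⬝ᵥ M.mulVec x}

open Finset

section EuclNorm

variable {n : ℕ}

lemma euclNorm_eq_norm (x : Fin n → ℝ) : euclNorm x = ‖WithLp.toLp 2 x‖ := by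
  simp [euclNorm, EuclideanSpace.norm_eq]

lemma euclNorm_nonneg (x : Fin n → ℝ) : 0 ≤ euclNorm x := Real.sqrt_nonneg _

lemma euclNorm_sq (x : Fin n → ℝ) : euclNorm x ^ 2 = x ⬝ᵥ x := by
  rw [euclNorm, Real.sq_sqrt (by positivity)]
  simp [dotProduct, sq]

lemma euclNorm_add_le (x y : Fin n → ℝ) : euclNorm (x + y) ≤ euclNorm x + euclNorm y := by
  simpa only [euclNorm_eq_norm, WithLp.toLp_add] using norm_add_le _ _

lemma euclNorm_smul (c : ℝ) (x : Fin n → ℝ) : euclNorm (c • x) = |c| * euclNorm x := by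
  simp only [euclNorm_eq_norm, WithLp.toLp_smul, norm_smul, Real.norm_eq_abs]

lemma euclNorm_sum_le {ι : Type*} (s : Finset ι) (f : ι → Fin n → ℝ) :
    euclNorm (∑ k ∈ s, f k) ≤ ∑ k ∈ s, euclNorm (f k) := by
  simpa only [euclNorm_eq_norm, WithLp.toLp_sum] using norm_sum_le _ _

lemma sum_abs_le_sqrt_card_mul_euclNorm (s : Finset (Fin n)) (x : Fin n → ℝ) :
    ∑ k ∈ s, |x k| ≤ √(#s) * euclNorm x := by
  calc ∑ k ∈ s, |x k| = ∑ k ∈ s, 1 * |x k| := by simp only [one_mul]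
    _ ≤ √(∑ k ∈ s, 1 ^ 2) * √(∑ k ∈ s, |x k| ^ 2) := Real.sum_mul_le_sqrt_mul_sqrt _ _ _
    _ ≤ √(#s) * euclNorm x := by
      simp only [one_pow, sum_const, nsmul_eq_mul, mul_one, sq_abs]
      gcongr
      exact Real.sqrt_le_sqrt <|
        sum_le_sum_of_subset_of_nonneg (subset_univ s) fun k _ _ => sq_nonneg (x k)

end EuclNorm

section QuadraticForm

variable {n : ℕ} {M : Matrix (Fin n) (Fin n) ℝ}

lemma euclNorm_sq_le_dotProduct_mulVec (hM : (M - 1).PosSemidef) (x : Fin n → ℝ) :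
    euclNorm x ^ 2 ≤ x ⬝ᵥ M *ᵥ x := by
  have h := hM.dotProduct_mulVec_nonneg x
  rw [sub_mulVec, one_mulVec, dotProduct_sub] at h
  simp only [star_trivial] at h
  rw [euclNorm_sq]
  linarith

lemma euclNorm_le_sqrt_dotProduct_mulVec (hM : (M - 1).PosSemidef) (x : Fin n → ℝ) :
    euclNorm x ≤ √(x ⬝ᵥ M *ᵥ x) :=
  Real.le_sqrt_of_sq_le (euclNorm_sq_le_dotProduct_mulVec hM x)

lemma bddBelow_quadForm_unitSphere (hM : (M - 1).PosSemidef) :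
    BddBelow {r : ℝ | ∃ x : Fin n → ℝ, euclNorm x = 1 ∧ r = x ⬝ᵥ M *ᵥ x} := by
  refine ⟨1, ?_⟩
  rintro _ ⟨x, hx, rfl⟩
  simpa [hx] using euclNorm_sq_le_dotProduct_mulVec hM x

lemma one_le_qfInf [NeZero n] (hM : (M - 1).PosSemidef) : 1 ≤ qfInf M := by
  refine le_csInf ⟨_, Pi.single 0 1, by simp [euclNorm, Pi.single_apply], rfl⟩ ?_
  rintro _ ⟨x, hx, rfl⟩
  simpa [hx] using euclNorm_sq_le_dotProduct_mulVec hM x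

lemma qfInf_mul_euclNorm_sq_le (hM : (M - 1).PosSemidef) (x : Fin n → ℝ) :
    qfInf M * euclNorm x ^ 2 ≤ x ⬝ᵥ M *ᵥ x := by
  rcases (euclNorm_nonneg x).eq_or_lt with h | h
  · rw [← h, zero_pow two_ne_zero, mul_zero]
    exact (sq_nonneg _).trans (euclNorm_sq_le_dotProduct_mulVec hM x)
  · set c := euclNorm x
    have hunit : euclNorm (c⁻¹ • x) = 1 := by
      rw [euclNorm_smul, abs_inv, abs_of_pos h, inv_mul_cancel₀ h.ne']
    have hinf := csInf_le (bddBelow_quadForm_unitSphere hM) ⟨_, hunit, rfl⟩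
    rw [mulVec_smul, dotProduct_smul, smul_dotProduct, smul_eq_mul, smul_eq_mul] at hinf
    calc qfInf M * c ^ 2 ≤ c⁻¹ * (c⁻¹ * (x ⬝ᵥ M *ᵥ x)) * c ^ 2 := by gcongr; exact hinf
      _ = x ⬝ᵥ M *ᵥ x := by field_simp

lemma euclNorm_le_rpow_qfInf_mul [NeZero n] (hM : (M - 1).PosSemidef) (x : Fin n → ℝ) :
    euclNorm x ≤ qfInf M ^ (-(1 : ℝ) / 2) * √(x ⬝ᵥ M *ᵥ x) := by
  have hq : 0 < qfInf M := one_pos.trans_le (one_le_qfInf hM)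
  rw [neg_div, Real.rpow_neg hq.le, ← Real.sqrt_eq_rpow]
  calc euclNorm x = (√(qfInf M))⁻¹ * √(qfInf M * euclNorm x ^ 2) := by
        rw [Real.sqrt_mul hq.le, Real.sqrt_sq (euclNorm_nonneg x),
          inv_mul_cancel_left₀ (Real.sqrt_pos.mpr hq).ne']
    _ ≤ (√(qfInf M))⁻¹ * √(x ⬝ᵥ M *ᵥ x) := by
        gcongr; exact qfInf_mul_euclNorm_sq_le hM x

end QuadraticForm

lemma transpose_mul_apply {l m n α : Type*} [Fintype m] [CommSemiring α] (C : Matrix l m α)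
    (X : Matrix m n α) (i : n) : (C * X)ᵀ i = C *ᵥ Xᵀ i := by
  ext j; simp [mulVec, dotProduct, mul_apply]

lemma euclNorm_mulVec_le {m n : ℕ} (C : Matrix (Fin m) (Fin n) ℝ) {v : Fin n → ℝ}
    {s : Finset (Fin n)} (hv : ∀ k, v k ≠ 0 → k ∈ s) {a : ℝ} (ha : 0 ≤ a)
    (hC : ∀ k, euclNorm (Cᵀ k) ≤ a) :
    euclNorm (C *ᵥ v) ≤ √(#s) * euclNorm v * a := by
  have hsum : C *ᵥ v = ∑ k ∈ s, v k • Cᵀ k := by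
    rw [mulVec_eq_sum, ← sum_subset (subset_univ s)]
    · simp only [op_smul_eq_smul]
    · intro k _ hk
      simp [not_imp_comm.1 (hv k) hk]
  calc euclNorm (C *ᵥ v) ≤ ∑ k ∈ s, |v k| * euclNorm (Cᵀ k) := by
        rw [hsum]; exact (euclNorm_sum_le s _).trans_eq (by simp only [euclNorm_smul])
    _ ≤ (∑ k ∈ s, |v k|) * a := by rw [sum_mul]; gcongr with k; exact hC k
    _ ≤ √(#s) * euclNorm v * a := by gcongr; exact sum_abs_le_sqrt_card_mul_euclNorm s v

section ColumnSparse

variable {n d : ℕ} {Pa : Fin n → Finset (Fin n)}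

lemma euclNorm_col_mul_le {m : ℕ} (hPa : ∀ i, #(Pa i) ≤ d) {C : Matrix (Fin m) (Fin n) ℝ}
    {X : Matrix (Fin n) (Fin n) ℝ} (hX : ∀ i j, X j i ≠ 0 → j ∈ Pa i) {a : ℝ} (ha : 0 ≤ a)
    (hC : ∀ k, euclNorm (Cᵀ k) ≤ a) (i : Fin n) :
    euclNorm ((C * X)ᵀ i) ≤ √d * euclNorm (Xᵀ i) * a := by
  rw [transpose_mul_apply]
  refine (euclNorm_mulVec_le C (v := Xᵀ i) (hX i) ha hC).trans ?_
  gcongr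
  · exact euclNorm_nonneg _
  · exact hPa i

variable {A B : Matrix (Fin n) (Fin n) ℝ}

lemma euclNorm_col_pow_succ_le (hPa : ∀ i, #(Pa i) ≤ d) (hA : ∀ i j, A j i ≠ 0 → j ∈ Pa i)
    {a : ℝ} (ha : 0 ≤ a) (hAcol : ∀ i, euclNorm (Aᵀ i) ≤ a) (m : ℕ) (i : Fin n) :
    euclNorm ((A ^ (m + 1))ᵀ i) ≤ √d ^ m * a ^ (m + 1) := by
  induction m generalizing i with
  | zero => simpa using hAcol i
  | succ m ih =>
    rw [pow_succ A (m + 1)]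
    calc _ ≤ √d * euclNorm (Aᵀ i) * (√d ^ m * a ^ (m + 1)) :=
          euclNorm_col_mul_le hPa hA (by positivity) ih i
      _ ≤ √d * a * (√d ^ m * a ^ (m + 1)) := by gcongr; exact hAcol i
      _ = √d ^ (m + 1) * a ^ (m + 1 + 1) := by ring

lemma euclNorm_col_pow_sub_pow_le (hPa : ∀ i, #(Pa i) ≤ d)
    (hA : ∀ i j, A j i ≠ 0 → j ∈ Pa i) (hB : ∀ i j, B j i ≠ 0 → j ∈ Pa i)
    {a b ε : ℝ} (ha : 0 ≤ a) (hAcol : ∀ i, euclNorm (Aᵀ i) ≤ a)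
    (hBcol : ∀ i, euclNorm (Bᵀ i) ≤ b) (hΔ : ∀ i, euclNorm ((A - B)ᵀ i) ≤ ε) (m : ℕ) (i : Fin n) :
    euclNorm ((A ^ (m + 1) - B ^ (m + 1))ᵀ i) ≤
      √d ^ m * ε * ∑ k ∈ range (m + 1), a ^ k * b ^ (m - k) := by
  have hΔsupp : ∀ i j, (A - B) j i ≠ 0 → j ∈ Pa i := fun i j h => by
    by_contra hj
    exact h (by simp [not_imp_comm.1 (hA i j) hj, not_imp_comm.1 (hB i j) hj])
  induction m generalizing i with
  | zero => simpa using hΔ i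
  | succ m ih =>
    have hsplit : A ^ (m + 1 + 1) - B ^ (m + 1 + 1) =
        A ^ (m + 1) * (A - B) + (A ^ (m + 1) - B ^ (m + 1)) * B := by
      rw [pow_succ A (m + 1), pow_succ B (m + 1)]; noncomm_ring
    have hE : 0 ≤ √d ^ m * ε * ∑ k ∈ range (m + 1), a ^ k * b ^ (m - k) :=
      (euclNorm_nonneg _).trans (ih i)
    rw [hsplit, transpose_add]
    calc _ ≤ euclNorm ((A ^ (m + 1) * (A - B))ᵀ i) +
          euclNorm (((A ^ (m + 1) - B ^ (m + 1)) * B)ᵀ i) := euclNorm_add_le _ _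
      _ ≤ √d * ε * (√d ^ m * a ^ (m + 1)) +
          √d * b * (√d ^ m * ε * ∑ k ∈ range (m + 1), a ^ k * b ^ (m - k)) := by
        gcongr
        · refine (euclNorm_col_mul_le hPa hΔsupp (by positivity)
            (euclNorm_col_pow_succ_le hPa hA ha hAcol m) i).trans ?_
          gcongr
          exact hΔ i
        · exact (euclNorm_col_mul_le hPa hB hE ih i).trans
            (mul_le_mul_of_nonneg_right (by gcongr; exact hBcol i) hE)
      _ = √d ^ (m + 1) * ε * ∑ k ∈ range (m + 1 + 1), a ^ k * b ^ (m + 1 - k) := by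
        rw [(Commute.all a b).geom_sum₂_succ_eq (n := m + 1), Nat.add_sub_cancel]
        ring

end ColumnSparse

lemma natCast_rpow_succ_sub_one_div_two (d m : ℕ) :
    (d : ℝ) ^ ((((m + 1 : ℕ) : ℝ) - 1) / 2) = √d ^ m := by
  rw [Real.sqrt_eq_rpow, ← Real.rpow_natCast, ← Real.rpow_mul (Nat.cast_nonneg d)]
  push_cast; ring_nf

theorem stmt11_general (N d : ℕ) (hd : 1 ≤ d)
    (B A : Matrix (Fin N) (Fin N) ℝ)
    (Pa : Fin N → Finset (Fin N)) (hPa : ∀ i, (Pa i).card ≤ d)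
    (hsuppB : ∀ i j, B j i ≠ 0 → j ∈ Pa i)
    (hsuppA : ∀ i j, A j i ≠ 0 → j ∈ Pa i)
    (hBcol : ∀ i, euclNorm (fun j => B j i) ≤ 1)
    (M : Fin N → Matrix (Fin N) (Fin N) ℝ)
    (hMI : ∀ i, (M i - 1).PosSemidef)
    (β : ℝ)
    (hΔ : ∀ i, Real.sqrt ((fun j => (A - B) j i) ⬝ᵥ (M i).mulVec (fun j => (A - B) j i)) ≤ β) :
    ∀ ℓ : ℕ, 1 ≤ ℓ → ∀ i,
      euclNorm (fun j => (A ^ ℓ - B ^ ℓ) j i) <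
        (d : ℝ) ^ (((ℓ : ℝ) - 1) / 2) * (β + 1) ^ ℓ *
          (⨆ j : Fin N, (qfInf (M j)) ^ (-(1 : ℝ) / 2)) := by
  rintro ℓ hℓ i
  obtain ⟨m, rfl⟩ := Nat.exists_eq_add_of_le' hℓ
  have : NeZero N := ⟨i.pos.ne'⟩
  set S := ⨆ j : Fin N, qfInf (M j) ^ (-(1 : ℝ) / 2)
  have hS : ∀ j, qfInf (M j) ^ (-(1 : ℝ) / 2) ≤ S := le_ciSup (Set.finite_range _).bddAbove
  have hS_pos : 0 < S :=
    (Real.rpow_pos_of_pos (one_pos.trans_le (one_le_qfInf (hMI i))) _).trans_le (hS i)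
  have hΔS (j : Fin N) : euclNorm ((A - B)ᵀ j) ≤ β * S :=
    (euclNorm_le_rpow_qfInf_mul (hMI j) _).trans <| by
      rw [mul_comm β]; gcongr; exacts [hS j, hΔ j]
  have hAcol (j : Fin N) : euclNorm (Aᵀ j) ≤ β + 1 := by
    have hΔβ := (euclNorm_le_sqrt_dotProduct_mulVec (hMI j) _).trans (hΔ j)
    calc euclNorm (Aᵀ j) = euclNorm ((A - B)ᵀ j + Bᵀ j) := by
          congr 1; ext k; simp
      _ ≤ β + 1 := (euclNorm_add_le _ _).trans (add_le_add hΔβ (hBcol j))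
  have hβ : 0 ≤ β := (Real.sqrt_nonneg _).trans (hΔ i)
  have hgeom : (∑ k ∈ range (m + 1), (β + 1) ^ k) * β = (β + 1) ^ (m + 1) - 1 := by
    simpa using geom_sum_mul (β + 1) (m + 1)
  have hd_pow : 0 < √d ^ m := pow_pos (Real.sqrt_pos.2 (by exact_mod_cast hd)) m
  calc euclNorm ((A ^ (m + 1) - B ^ (m + 1))ᵀ i)
      ≤ √d ^ m * (β * S) * ∑ k ∈ range (m + 1), (β + 1) ^ k * 1 ^ (m - k) :=
        euclNorm_col_pow_sub_pow_le hPa hsuppA hsuppB (by linarith) hAcol hBcol hΔS m i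
    _ = √d ^ m * ((β + 1) ^ (m + 1) - 1) * S := by
        simp only [one_pow, mul_one]; linear_combination (√d ^ m * S) * hgeom
    _ < √d ^ m * (β + 1) ^ (m + 1) * S :=
        mul_lt_mul_of_pos_right (mul_lt_mul_of_pos_left (by linarith) hd_pow) hS_pos
    _ = _ := by rw [natCast_rpow_succ_sub_one_div_two]

/-- compounding of estimation errors, Lemma 3 of the paper:
if `A` and `B` share the same support contained columnwise in parent sets `Pa(i)` of size at
most `d`, each column of `B` has norm at most `1`, and for matrices `M_i ⪰ I`
`‖[A − B]_i‖_{M_i} ≤ β`, then for every `ℓ ≥ 1` and every column `i`,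
`‖[Aℓ − Bℓ]_i‖ < d^{(ℓ−1)/2}·(β+1)^ℓ·max_j λ_min(M_j)^{−1/2}`. -/
theorem stmt11 (N d : ℕ) (hN : 0 < N) (hd : 1 ≤ d)
    (B A : Matrix (Fin N) (Fin N) ℝ)
    (Pa : Fin N → Finset (Fin N)) (hPa : ∀ i, (Pa i).card ≤ d)
    (hsuppB : ∀ i j, B j i ≠ 0 → j ∈ Pa i)
    (hsuppA : ∀ i j, A j i ≠ 0 → j ∈ Pa i)
    (hBcol : ∀ i, euclNorm (fun j => B j i) ≤ 1)
    (M : Fin N → Matrix (Fin N) (Fin N) ℝ)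
    (hMsym : ∀ i, (M i).IsSymm) (hMI : ∀ i, (M i - 1).PosSemidef)
    (β : ℝ) (hβ : 0 ≤ β)
    (hΔ : ∀ i, Real.sqrt ((fun j => (A - B) j i) ⬝ᵥ (M i).mulVec (fun j => (A - B) j i)) ≤ β) :
    ∀ ℓ : ℕ, 1 ≤ ℓ → ∀ i,
      euclNorm (fun j => (A ^ ℓ - B ^ ℓ) j i) <
        (d : ℝ) ^ (((ℓ : ℝ) - 1) / 2) * (β + 1) ^ ℓ *
          (⨆ j : Fin N, (qfInf (M j)) ^ (-(1 : ℝ) / 2)) :=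
  stmt11_general N d hd B A Pa hPa hsuppB hsuppA hBcol M hMI β hΔ
end

section
/- Let g(x) = √(κ_max·x + α m²·√x)/(κ_min·x/m − α m²·√x) + C/(κ_min·x/m − α m²·√x) with constants κ_max, κ_min, m, C > 0, α > 2, m ≥ 1. Then g is strictly decreasing on the interval x > τ where τ = α²m⁶/κ_min² (on which the denominator κ_min·x/m − α m²·√x is positive). -/
/-- the function
`g(x) = √(κ_max·x + α·m²·√x)/(κ_min·x/m − α·m²·√x) + C/(κ_min·x/m − α·m²·√x)`
is strictly decreasing on `(τ, ∞)` where `τ = α²m⁶/κ_min²`. -/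
theorem stmt16 (κmax κmin m C α : ℝ)
    (hκ : κmin ≤ κmax) (hκmin : 0 < κmin) (hm : 1 ≤ m) (hC : 0 < C) (hα : 2 < α) :
    StrictAntiOn
      (fun x : ℝ =>
        Real.sqrt (κmax * x + α * m ^ 2 * Real.sqrt x) /
            (κmin * x / m - α * m ^ 2 * Real.sqrt x) +
          C / (κmin * x / m - α * m ^ 2 * Real.sqrt x))
      (Set.Ioi (α ^ 2 * m ^ 6 / κmin ^ 2)) := by
  intro a ha b hb hab
  simp only [Set.mem_Ioi] at ha hb
  have hm0 : (0:ℝ) < m := lt_of_lt_of_le one_pos hm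
  have hα0 : (0:ℝ) < α := by linarith
  have hκmax : 0 < κmax := lt_of_lt_of_le hκmin hκ
  have hτ : 0 < α ^ 2 * m ^ 6 / κmin ^ 2 := by positivity
  have ha0 : 0 < a := lt_trans hτ ha
  have hb0 : 0 < b := lt_trans hτ hb
  set sa := Real.sqrt a with hsadef
  set sb := Real.sqrt b with hsbdef
  have hsa2 : sa ^ 2 = a := Real.sq_sqrt ha0.le
  have hsb2 : sb ^ 2 = b := Real.sq_sqrt hb0.le
  have hsa0 : 0 < sa := Real.sqrt_pos.mpr ha0
  have hsb0 : 0 < sb := Real.sqrt_pos.mpr hb0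
  have hsab : sa < sb := Real.sqrt_lt_sqrt ha0.le hab
  have hτs : Real.sqrt (α ^ 2 * m ^ 6 / κmin ^ 2) = α * m ^ 3 / κmin := by
    rw [show α ^ 2 * m ^ 6 / κmin ^ 2 = (α * m ^ 3 / κmin) ^ 2 by ring]
    exact Real.sqrt_sq (by positivity)
  have hkeya : α * m ^ 3 / κmin < sa := by
    have := Real.sqrt_lt_sqrt hτ.le ha
    rwa [hτs] at this
  have hqa : 0 < κmin * sa - α * m ^ 3 := by
    rw [div_lt_iff₀ hκmin] at hkeya; linarith
  have hqb : 0 < κmin * sb - α * m ^ 3 := by nlinarith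
  have hDa : 0 < κmin * a / m - α * m ^ 2 * sa := by
    rw [← hsa2]
    have : κmin * sa ^ 2 / m - α * m ^ 2 * sa = (κmin * sa - α * m ^ 3) * sa / m := by
      field_simp
    rw [this]; positivity
  have hDb : 0 < κmin * b / m - α * m ^ 2 * sb := by
    rw [← hsb2]
    have : κmin * sb ^ 2 / m - α * m ^ 2 * sb = (κmin * sb - α * m ^ 3) * sb / m := by
      field_simp
    rw [this]; positivity
  have hDab : κmin * a / m - α * m ^ 2 * sa < κmin * b / m - α * m ^ 2 * sb := by
    rw [← hsa2, ← hsb2]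
    have e1 : κmin * sa ^ 2 / m - α * m ^ 2 * sa = (κmin * sa - α * m ^ 3) * sa / m := by
      field_simp
    have e2 : κmin * sb ^ 2 / m - α * m ^ 2 * sb = (κmin * sb - α * m ^ 3) * sb / m := by
      field_simp
    rw [e1, e2, div_lt_div_iff_of_pos_right hm0]
    nlinarith
  have hNa0 : 0 < κmax * a + α * m ^ 2 * sa := by positivity
  have hNb0 : 0 < κmax * b + α * m ^ 2 * sb := by positivity
  -- key polynomial inequality
  have hfin : (κmax * sb + α * m ^ 2) * sa * (κmin * sa - α * m ^ 3) ^ 2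
      < (κmax * sa + α * m ^ 2) * sb * (κmin * sb - α * m ^ 3) ^ 2 := by
    have h1 : (κmax * sb + α * m ^ 2) * sa < (κmax * sa + α * m ^ 2) * sb := by
      nlinarith [mul_lt_mul_of_pos_left hsab (show (0:ℝ) < α * m ^ 2 by positivity)]
    have hqq : κmin * sa - α * m ^ 3 < κmin * sb - α * m ^ 3 := by
      have := mul_lt_mul_of_pos_left hsab hκmin
      linarith
    have h2 : (κmin * sa - α * m ^ 3) ^ 2 < (κmin * sb - α * m ^ 3) ^ 2 :=
      pow_lt_pow_left₀ hqq hqa.le two_ne_zero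
    have h3 := mul_lt_mul_of_pos_right h1 (pow_pos hqa 2)
    have h4 := mul_lt_mul_of_pos_left h2
      (show (0:ℝ) < (κmax * sa + α * m ^ 2) * sb by positivity)
    calc (κmax * sb + α * m ^ 2) * sa * (κmin * sa - α * m ^ 3) ^ 2
        < (κmax * sa + α * m ^ 2) * sb * (κmin * sa - α * m ^ 3) ^ 2 := h3
      _ < (κmax * sa + α * m ^ 2) * sb * (κmin * sb - α * m ^ 3) ^ 2 := by
          rw [mul_assoc, mul_assoc]; exact mul_lt_mul_of_pos_left (by
            exact mul_lt_mul_of_pos_left h2 hsb0) (by positivity)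
  have hmain : (κmax * b + α * m ^ 2 * sb) * (κmin * a / m - α * m ^ 2 * sa) ^ 2
      < (κmax * a + α * m ^ 2 * sa) * (κmin * b / m - α * m ^ 2 * sb) ^ 2 := by
    rw [← hsa2, ← hsb2]
    have h := mul_lt_mul_of_pos_left hfin (show (0:ℝ) < sa * sb / m ^ 2 by positivity)
    have eL : (κmax * sb ^ 2 + α * m ^ 2 * sb) * (κmin * sa ^ 2 / m - α * m ^ 2 * sa) ^ 2
        = sa * sb / m ^ 2 * ((κmax * sb + α * m ^ 2) * sa * (κmin * sa - α * m ^ 3) ^ 2) := by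
      field_simp
    have eR : (κmax * sa ^ 2 + α * m ^ 2 * sa) * (κmin * sb ^ 2 / m - α * m ^ 2 * sb) ^ 2
        = sa * sb / m ^ 2 * ((κmax * sa + α * m ^ 2) * sb * (κmin * sb - α * m ^ 3) ^ 2) := by
      field_simp
    rw [eL, eR]; exact h
  have hsqrt : Real.sqrt (κmax * b + α * m ^ 2 * sb) / (κmin * b / m - α * m ^ 2 * sb)
      < Real.sqrt (κmax * a + α * m ^ 2 * sa) / (κmin * a / m - α * m ^ 2 * sa) := by
    rw [show Real.sqrt (κmax * b + α * m ^ 2 * sb) / (κmin * b / m - α * m ^ 2 * sb)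
        = Real.sqrt ((κmax * b + α * m ^ 2 * sb) / (κmin * b / m - α * m ^ 2 * sb) ^ 2) by
      rw [Real.sqrt_div hNb0.le, Real.sqrt_sq hDb.le]]
    rw [show Real.sqrt (κmax * a + α * m ^ 2 * sa) / (κmin * a / m - α * m ^ 2 * sa)
        = Real.sqrt ((κmax * a + α * m ^ 2 * sa) / (κmin * a / m - α * m ^ 2 * sa) ^ 2) by
      rw [Real.sqrt_div hNa0.le, Real.sqrt_sq hDa.le]]
    apply Real.sqrt_lt_sqrt (by positivity)
    rw [div_lt_div_iff₀ (by positivity) (by positivity)]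
    exact hmain
  have hCpart : C / (κmin * b / m - α * m ^ 2 * sb) < C / (κmin * a / m - α * m ^ 2 * sa) :=
    div_lt_div_of_pos_left hC hDa hDab
  exact add_lt_add hsqrt hCpart
end
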